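/- arXiv:1904.10693 — 9 statements merged into one kernel-verified Lean document; each statement's English description precedes it below -/
import Mathlib

section
/- For every N ∈ ℕ and every n ∈ {0,…,N+1}, the kernel Λ_N maps the (N+1)-th Krawtchouk polynomials to the N-th ones: for all x ∈ {0,…,N}, (K_{N+1,n}(x) + K_{N+1,n}(x+1))/2 = K_{N,n}(x) when n ≤ N, and (K_{N+1,N+1}(x) + K_{N+1,N+1}(x+1))/2 = 0 (convention K_{N,N+1} = 0 on {0,…,N}). -/
/-- The Krawtchouk polynomial `K_{N,n}(x) = n! 2^{-n} ∑_{j=0}^n (-1)^{n-j} C(x,j) C(N-x,n-j)`. -/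
noncomputable def krawtchouk (N n x : ℕ) : ℝ :=
  (n.factorial : ℝ) * (2 : ℝ) ^ (-(n : ℤ)) *
    ∑ j ∈ Finset.range (n + 1),
      (-1 : ℝ) ^ (n - j) * (x.choose j : ℝ) * ((N - x).choose (n - j) : ℝ)

lemma key1 (a b m : ℕ) :
    (∑ j ∈ Finset.range (m+2), (-1:ℝ)^(m+1-j) * (a.choose j) * ((b+1).choose (m+1-j)))
      = (∑ j ∈ Finset.range (m+2), (-1:ℝ)^(m+1-j) * (a.choose j) * (b.choose (m+1-j)))
        + (∑ j ∈ Finset.range (m+1), (-1:ℝ)^(m+1-j) * (a.choose j) * (b.choose (m-j))) := by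
  rw [Finset.sum_range_succ, Finset.sum_range_succ (f := fun j => (-1:ℝ)^(m+1-j) * (a.choose j) * (b.choose (m+1-j)))]
  have : ∀ j ∈ Finset.range (m+1),
      (-1:ℝ)^(m+1-j) * (a.choose j) * ((b+1).choose (m+1-j))
      = (-1:ℝ)^(m+1-j) * (a.choose j) * (b.choose (m+1-j))
        + (-1:ℝ)^(m+1-j) * (a.choose j) * (b.choose (m-j)) := by
    intro j hj
    simp only [Finset.mem_range] at hj
    have hle : j ≤ m := Nat.lt_succ_iff.mp hj
    have h1 : m+1-j = (m-j)+1 := by omega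
    rw [h1, Nat.choose_succ_succ]
    push_cast
    ring
  rw [Finset.sum_congr rfl this, Finset.sum_add_distrib]
  simp
  ring

lemma key2 (a b m : ℕ) :
    (∑ j ∈ Finset.range (m+2), (-1:ℝ)^(m+1-j) * ((a+1).choose j) * (b.choose (m+1-j)))
      = (∑ j ∈ Finset.range (m+2), (-1:ℝ)^(m+1-j) * (a.choose j) * (b.choose (m+1-j)))
        - (∑ j ∈ Finset.range (m+1), (-1:ℝ)^(m+1-j) * (a.choose j) * (b.choose (m-j))) := by
  rw [Finset.sum_range_succ' (f := fun j => (-1:ℝ)^(m+1-j) * ((a+1).choose j) * (b.choose (m+1-j))),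
      Finset.sum_range_succ' (f := fun j => (-1:ℝ)^(m+1-j) * (a.choose j) * (b.choose (m+1-j)))]
  have : ∀ j ∈ Finset.range (m+1),
      (-1:ℝ)^(m+1-(j+1)) * ((a+1).choose (j+1)) * (b.choose (m+1-(j+1)))
      = (-1:ℝ)^(m+1-(j+1)) * (a.choose (j+1)) * (b.choose (m+1-(j+1)))
        - (-1:ℝ)^(m+1-j) * (a.choose j) * (b.choose (m-j)) := by
    intro j hj
    simp only [Finset.mem_range] at hj
    have hle : j ≤ m := Nat.lt_succ_iff.mp hj
    have h1 : m+1-(j+1) = m-j := by omega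
    have h2 : m+1-j = (m-j)+1 := by omega
    rw [h1, h2, Nat.choose_succ_succ]
    push_cast
    ring
  rw [Finset.sum_congr rfl this, Finset.sum_sub_distrib]
  simp only [Nat.choose_zero_right]
  ring

lemma key (a b n : ℕ) :
    (∑ j ∈ Finset.range (n+1), (-1:ℝ)^(n-j) * (a.choose j) * ((b+1).choose (n-j)))
      + (∑ j ∈ Finset.range (n+1), (-1:ℝ)^(n-j) * ((a+1).choose j) * (b.choose (n-j)))
      = 2 * ∑ j ∈ Finset.range (n+1), (-1:ℝ)^(n-j) * (a.choose j) * (b.choose (n-j)) := by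
  cases n with
  | zero => simp; norm_num
  | succ m => rw [key1, key2]; ring

lemma kraw_vanish (N x : ℕ) (hx : x ≤ N) : krawtchouk N (N+1) x = 0 := by
  unfold krawtchouk
  rw [Finset.sum_eq_zero, mul_zero]
  intro j hj
  rcases le_or_gt j x with h | h
  · have : N - x < N + 1 - j := by omega
    rw [Nat.choose_eq_zero_of_lt this]
    simp
  · rw [Nat.choose_eq_zero_of_lt h]
    simp

/-- The kernel `Λ_N`, averaging over `x` and `x+1`, maps the `(N+1)`-th Krawtchouk
polynomials to the `N`-th ones (with the convention `K_{N,N+1} = 0` on `{0,…,N}`). -/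
theorem lambda_maps_krawtchouk (N : ℕ) (n : ℕ) (hn : n ≤ N + 1) (x : ℕ) (hx : x ≤ N) :
    (krawtchouk (N + 1) n x + krawtchouk (N + 1) n (x + 1)) / 2 =
      if n ≤ N then krawtchouk N n x else 0 := by
  have h1 : N + 1 - x = (N - x) + 1 := by omega
  have h2 : N + 1 - (x + 1) = N - x := by omega
  have main : (krawtchouk (N + 1) n x + krawtchouk (N + 1) n (x + 1)) / 2 = krawtchouk N n x := by
    unfold krawtchouk
    rw [h1, h2, ← mul_add, key]
    ring
  rw [main]
  split
  · rfl
  · have hnn : n = N + 1 := by omega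
    subst hnn
    exact kraw_vanish N x hx
end

section
/- Let μ be a Borel probability measure on ℝ integrating the function x ↦ exp(x²/4). Then for every z ∈ ℂ, the function x ↦ Σ_{n∈ℕ} |h_n(x)| |z|^n/n! is μ-integrable, and ∫ exp(zx − z²/2) μ(dx) = Σ_{n∈ℕ} (∫ h_n dμ) z^n/n!. -/
open MeasureTheory

/-- The probabilists' Hermite polynomials over `ℝ`:
`h_0 = 1`, `h_{n+1}(x) = x h_n(x) - h_n'(x)`. -/
noncomputable def hermiteR : ℕ → Polynomial ℝ
  | 0 => 1
  | n + 1 => Polynomial.X * hermiteR n - Polynomial.derivative (hermiteR n)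

/-!
Expanding `hₙ` in monomials shows that `hₙ(x) wⁿ / n!` is the `n`-th Cauchy-product coefficient
of the exponential series of `x w` and the series of `exp (-w² / 2)` in powers of `w`. This gives
the generating function, and the same decomposition with every term replaced by its norm bounds
`∑ₙ |hₙ(x)| |z|ⁿ / n!` by `exp (|x| |z| + |z|² / 2) ≤ exp (3 |z|² / 2) exp (x² / 4)`. That bound is
`μ`-integrable, so dominated convergence exchanges the sum with the integral.
-/

open Polynomial Finset
open scoped Nat

lemma hermiteR_eq_map (n : ℕ) : hermiteR n = (hermite n).map (algebraMap ℤ ℝ) := by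
  induction n with
  | zero => simp [hermiteR]
  | succ n ih =>
    rw [hermiteR, hermite_succ, Polynomial.map_sub, Polynomial.map_mul, map_X,
      ← derivative_map, ih]

lemma ofReal_eval_hermiteR (n : ℕ) (x : ℝ) :
    (((hermiteR n).eval x : ℝ) : ℂ) = aeval (x : ℂ) (hermite n) := by
  rw [hermiteR_eq_map, eval_map_algebraMap, ← Complex.coe_algebraMap, aeval_algebraMap_apply]

lemma Nat.factorial_two_mul (m : ℕ) : (2 * m)! = 2 ^ m * m ! * (2 * m - 1)‼ := by
  rcases m with _ | m
  · rfl
  · rw [show 2 * (m + 1) = (2 * m + 1) + 1 by ring, Nat.factorial_eq_mul_doubleFactorial,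
      show 2 * m + 1 + 1 = 2 * (m + 1) by ring, Nat.doubleFactorial_two_mul,
      show 2 * (m + 1) - 1 = 2 * m + 1 by omega]

/-- The `k`-th Taylor coefficient of `w ↦ exp (c w²)`. -/
noncomputable def expSqCoeff {K : Type*} [DivisionRing K] (c : K) (k : ℕ) : K :=
  if Even k then c ^ (k / 2) / (k / 2)! else 0

section expSqCoeff

variable {K : Type*} [DivisionRing K]

lemma expSqCoeff_two_mul (c : K) (m : ℕ) : expSqCoeff c (2 * m) = c ^ m / m ! := by
  simp [expSqCoeff]

lemma expSqCoeff_of_not_even (c : K) {k : ℕ} (hk : ¬Even k) : expSqCoeff c k = 0 :=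
  if_neg hk

end expSqCoeff

lemma coeff_hermite_add {K : Type*} [Field K] [CharZero K] (j k : ℕ) :
    ((hermite (j + k)).coeff j : K) = (j + k)! / j ! * expSqCoeff (-2⁻¹) k := by
  rcases Nat.even_or_odd k with ⟨m, rfl⟩ | hk
  · rw [← two_mul, expSqCoeff_two_mul, add_comm, coeff_hermite_explicit]
    push_cast
    rw [Nat.cast_choose K (Nat.le_add_left j _), Nat.add_sub_cancel, Nat.factorial_two_mul]
    have : ((2 * m - 1)‼ : K) ≠ 0 := Nat.cast_ne_zero.2 (Nat.doubleFactorial_pos _).ne'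
    push_cast
    rw [neg_pow (2⁻¹ : K), inv_pow]
    field_simp
  · rw [coeff_hermite_of_odd_add (by grind),
      expSqCoeff_of_not_even _ (Nat.not_even_iff_odd.2 hk)]
    simp

lemma aeval_hermite_mul_pow_div_factorial {K : Type*} [Field K] [CharZero K] (x w : K) (n : ℕ) :
    aeval x (hermite n) * w ^ n / n ! =
      ∑ p ∈ antidiagonal n, (x * w) ^ p.1 / p.1 ! * (expSqCoeff (-2⁻¹) p.2 * w ^ p.2) := by
  rw [aeval_eq_sum_range, natDegree_hermite,
    ← Nat.sum_antidiagonal_eq_sum_range_succ fun j _ => (hermite n).coeff j • x ^ j,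
    sum_mul, sum_div]
  refine sum_congr rfl fun ⟨j, k⟩ hjk => ?_
  obtain rfl : j + k = n := mem_antidiagonal.1 hjk
  have : ((j + k)! : K) ≠ 0 := Nat.cast_ne_zero.2 (Nat.factorial_ne_zero _)
  rw [zsmul_eq_mul, coeff_hermite_add]
  field_simp
  ring

section RCLike

variable {𝕜 : Type*} [RCLike 𝕜]

lemma norm_expSqCoeff (c : 𝕜) (k : ℕ) : ‖expSqCoeff c k‖ = expSqCoeff ‖c‖ k := by
  unfold expSqCoeff
  split_ifs <;> simp

lemma hasSum_expSqCoeff_mul_pow (c w : 𝕜) :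
    HasSum (fun k => expSqCoeff c k * w ^ k) (NormedSpace.exp (c * w ^ 2)) := by
  have hodd : ∀ k ∉ Set.range (2 * ·), expSqCoeff c k * w ^ k = 0 := fun k hk => by
    rw [expSqCoeff_of_not_even _ fun ⟨m, hm⟩ => hk ⟨m, by dsimp only; omega⟩, zero_mul]
  rw [← (mul_right_injective₀ two_ne_zero).hasSum_iff hodd]
  convert NormedSpace.expSeries_div_hasSum_exp (c * w ^ 2) using 2 with m
  rw [Function.comp_apply, expSqCoeff_two_mul, pow_mul, mul_pow]
  ring

lemma hasSum_norm_expSqCoeff_mul_pow (c w : 𝕜) :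
    HasSum (fun k => ‖expSqCoeff c k * w ^ k‖) (Real.exp (‖c‖ * ‖w‖ ^ 2)) := by
  simpa [norm_expSqCoeff, Real.exp_eq_exp_ℝ] using hasSum_expSqCoeff_mul_pow ‖c‖ ‖w‖

lemma hasSum_norm_pow_div_factorial (y : 𝕜) :
    HasSum (fun j => ‖y ^ j / (j ! : 𝕜)‖) (Real.exp ‖y‖) := by
  simpa [Real.exp_eq_exp_ℝ] using NormedSpace.expSeries_div_hasSum_exp ‖y‖

end RCLike

section CauchyProduct

variable {R : Type*} [NormedRing R] {f g : ℕ → R}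

lemma HasSum.mul_antidiagonal_of_summable_norm [CompleteSpace R] {a b : R} (hf : HasSum f a)
    (hg : HasSum g b) (hf' : Summable (fun n => ‖f n‖)) (hg' : Summable (fun n => ‖g n‖)) :
    HasSum (fun n => ∑ p ∈ antidiagonal n, f p.1 * g p.2) (a * b) := by
  rw [← hf.tsum_eq, ← hg.tsum_eq, tsum_mul_tsum_eq_tsum_sum_antidiagonal_of_summable_norm hf' hg']
  exact (summable_norm_sum_mul_antidiagonal_of_summable_norm hf' hg').of_norm.hasSum

lemma tsum_norm_sum_mul_antidiagonal_le {a b : ℝ} (hf : HasSum (fun n => ‖f n‖) a)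
    (hg : HasSum (fun n => ‖g n‖) b) :
    ∑' n, ‖∑ p ∈ antidiagonal n, f p.1 * g p.2‖ ≤ a * b := by
  have hprod := hf.mul_antidiagonal_of_summable_norm hg (by simpa using hf.summable)
    (by simpa using hg.summable)
  refine hasSum_le (fun n => ?_)
    (summable_norm_sum_mul_antidiagonal_of_summable_norm hf.summable hg.summable).hasSum hprod
  exact (norm_sum_le _ _).trans (sum_le_sum fun p _ => norm_mul_le _ _)

end CauchyProduct

theorem hasSum_aeval_hermite_mul_pow_div_factorial (x w : ℂ) :
    HasSum (fun n => aeval x (hermite n) * w ^ n / n !) (Complex.exp (x * w - w ^ 2 / 2)) := by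
  simp_rw [aeval_hermite_mul_pow_div_factorial]
  have := (NormedSpace.expSeries_div_hasSum_exp (x * w)).mul_antidiagonal_of_summable_norm
    (hasSum_expSqCoeff_mul_pow (-2⁻¹) w) (hasSum_norm_pow_div_factorial _).summable
    (hasSum_norm_expSqCoeff_mul_pow _ _).summable
  rwa [← Complex.exp_eq_exp_ℂ, ← Complex.exp_add, neg_mul, ← sub_eq_add_neg, ← div_eq_inv_mul]
    at this

theorem summable_norm_aeval_hermite_mul_pow_div_factorial (x w : ℂ) :
    Summable (fun n => ‖aeval x (hermite n) * w ^ n / (n ! : ℂ)‖) := by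
  simp_rw [aeval_hermite_mul_pow_div_factorial]
  -- unifying the Cauchy-product lemma with this goal directly times out
  have hcauchy := summable_norm_sum_mul_antidiagonal_of_summable_norm
    (hasSum_norm_pow_div_factorial (x * w)).summable
    (hasSum_norm_expSqCoeff_mul_pow (-2⁻¹) w).summable
  exact hcauchy

theorem tsum_norm_aeval_hermite_mul_pow_div_factorial_le (x w : ℂ) :
    ∑' n, ‖aeval x (hermite n) * w ^ n / (n ! : ℂ)‖ ≤ Real.exp (‖x‖ * ‖w‖ + ‖w‖ ^ 2 / 2) := by
  simp_rw [aeval_hermite_mul_pow_div_factorial]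
  convert tsum_norm_sum_mul_antidiagonal_le (hasSum_norm_pow_div_factorial (x * w))
    (hasSum_norm_expSqCoeff_mul_pow (-2⁻¹) w) using 1
  rw [← Real.exp_add, norm_mul, norm_neg, norm_inv, RCLike.norm_ofNat, inv_mul_eq_div]

lemma integrable_tsum_norm_of_le {α E : Type*} [MeasurableSpace α] {μ : Measure α}
    [NormedAddCommGroup E] {F : ℕ → α → E} {g : α → ℝ} (hF : ∀ n, AEStronglyMeasurable (F n) μ)
    (hs : ∀ᵐ x ∂μ, Summable fun n => ‖F n x‖) (hle : ∀ᵐ x ∂μ, ∑' n, ‖F n x‖ ≤ g x)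
    (hg : Integrable g μ) :
    Integrable (fun x => ∑' n, ‖F n x‖) μ := by
  refine hg.mono' ?_ ?_
  · refine aestronglyMeasurable_of_tendsto_ae Filter.atTop (fun n => ?_)
      (hs.mono fun x hx => hx.hasSum.tendsto_sum_nat)
    exact Finset.aestronglyMeasurable_fun_sum _ fun i _ => (hF i).norm
  · filter_upwards [hle] with x hx
    rwa [Real.norm_of_nonneg (tsum_nonneg fun n => norm_nonneg _)]

theorem hermite_series_integrable_and_sum_general (μ : Measure ℝ)
    (hint : Integrable (fun x => Real.exp (x ^ 2 / 4)) μ) (z : ℂ) :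
    Integrable
      (fun x => ∑' n : ℕ, |(hermiteR n).eval x| * ‖z‖ ^ n / (n.factorial : ℝ)) μ ∧
    ∫ x, Complex.exp (z * (x : ℂ) - z ^ 2 / 2) ∂μ =
      ∑' n : ℕ, ((∫ x, (hermiteR n).eval x ∂μ : ℝ) : ℂ) * z ^ n / (n.factorial : ℂ) := by
  set f : ℕ → ℝ → ℂ := fun n x => (((hermiteR n).eval x : ℝ) : ℂ) * z ^ n / n ! with hf
  have hf_aeval (n : ℕ) (x : ℝ) : f n x = aeval (x : ℂ) (hermite n) * z ^ n / n ! := by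
    rw [hf, ← ofReal_eval_hermiteR]
  have hf_norm (n : ℕ) (x : ℝ) : ‖f n x‖ = |(hermiteR n).eval x| * ‖z‖ ^ n / n ! := by
    simp [hf]
  have hf_meas (n : ℕ) : AEStronglyMeasurable (f n) μ := by fun_prop
  have hdom (x : ℝ) : ∑' n, ‖f n x‖ ≤ Real.exp (3 / 2 * ‖z‖ ^ 2) * Real.exp (x ^ 2 / 4) :=
    calc ∑' n, ‖f n x‖ ≤ Real.exp (|x| * ‖z‖ + ‖z‖ ^ 2 / 2) := by
          simpa [hf_aeval] using tsum_norm_aeval_hermite_mul_pow_div_factorial_le x z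
      _ ≤ Real.exp (3 / 2 * ‖z‖ ^ 2) * Real.exp (x ^ 2 / 4) := by
          rw [← Real.exp_add, Real.exp_le_exp]
          nlinarith [sq_nonneg (|x| / 2 - ‖z‖), sq_abs x]
  have hsum (x : ℝ) : Summable fun n => ‖f n x‖ := by
    simpa only [hf_aeval] using summable_norm_aeval_hermite_mul_pow_div_factorial x z
  have hint_norm : Integrable (fun x => ∑' n, ‖f n x‖) μ :=
    integrable_tsum_norm_of_le hf_meas (ae_of_all _ hsum) (ae_of_all _ hdom) (hint.const_mul _)
  refine ⟨by simpa only [hf_norm] using hint_norm, ?_⟩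
  have hlim : ∀ᵐ x ∂μ, HasSum (fun n => f n x) (Complex.exp (z * x - z ^ 2 / 2)) :=
    ae_of_all _ fun x => by
      simpa only [hf_aeval, mul_comm (x : ℂ)] using hasSum_aeval_hermite_mul_pow_div_factorial x z
  rw [← (hasSum_integral_of_dominated_convergence _ hf_meas (fun n => ae_of_all _ fun x => le_rfl)
    (ae_of_all _ hsum) hint_norm hlim).tsum_eq]
  refine tsum_congr fun n => ?_
  simp_rw [hf, mul_div_assoc]
  rw [integral_mul_const, integral_complex_ofReal]

/-- If `μ` is a Borel probability measure on `ℝ` integrating `x ↦ exp(x²/4)`, then for every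
`z ∈ ℂ` the function `x ↦ ∑_n |h_n(x)| |z|^n / n!` is `μ`-integrable and
`∫ exp(zx - z²/2) dμ = ∑_n (∫ h_n dμ) z^n / n!`. -/
theorem hermite_series_integrable_and_sum (μ : Measure ℝ) [IsProbabilityMeasure μ]
    (hint : Integrable (fun x => Real.exp (x ^ 2 / 4)) μ) (z : ℂ) :
    Integrable
      (fun x => ∑' n : ℕ, |(hermiteR n).eval x| * ‖z‖ ^ n / (n.factorial : ℝ)) μ ∧
    ∫ x, Complex.exp (z * (x : ℂ) - z ^ 2 / 2) ∂μ =
      ∑' n : ℕ, ((∫ x, (hermiteR n).eval x ∂μ : ℝ) : ℂ) * z ^ n / (n.factorial : ℂ) :=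
  hermite_series_integrable_and_sum_general μ hint z
end

section
/- Fix N ∈ ℕ. For every n ∈ {0,…,N}, the function φ_n(x) = C(x,n) on {0,…,N} satisfies D_N[φ_n] = −n φ_n; moreover, every function f : {0,…,N} → ℝ with D_N[f] = −n f is a scalar multiple of φ_n. -/
/-- The Yule (pure-death) generator: `D[f](y) = y (f(y-1) - f(y))`. -/
noncomputable def yule (f : ℕ → ℝ) (y : ℕ) : ℝ :=
  (y : ℝ) * (f (y - 1) - f y)

/-- Key identity: `y * C(y-1, n) = (y - n) * C(y, n)` over ℝ. -/
lemma yule_key (y n : ℕ) :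
    (y : ℝ) * (((y - 1).choose n : ℕ) : ℝ) = ((y : ℝ) - n) * (y.choose n : ℝ) := by
  cases y with
  | zero =>
    cases n with
    | zero => simp
    | succ k => simp
  | succ m =>
    have hsub : (m + 1) - 1 = m := rfl
    rw [hsub]
    cases n with
    | zero => simp
    | succ k =>
      have h1 : (m + 1) * m.choose k = (m + 1).choose (k + 1) * (k + 1) :=
        Nat.add_one_mul_choose_eq m k
      have h2 : (m + 1).choose (k + 1) = m.choose k + m.choose (k + 1) :=
        Nat.choose_succ_succ m k
      have h1' : ((m : ℝ) + 1) * (m.choose k : ℝ) = ((m + 1).choose (k + 1) : ℝ) * ((k : ℝ) + 1) := by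
        exact_mod_cast congrArg (fun t : ℕ => (t : ℝ)) h1
      have h2' : ((m + 1).choose (k + 1) : ℝ) = (m.choose k : ℝ) + (m.choose (k + 1) : ℝ) := by
        exact_mod_cast congrArg (fun t : ℕ => (t : ℝ)) h2
      push_cast
      nlinarith [h1', h2']

/-- For `n ≤ N`, the function `φ_n(x) = C(x,n)` is an eigenfunction of the Yule generator
`D_N` on `{0,…,N}` for the eigenvalue `-n`, and it spans the corresponding eigenspace:
any `f` with `D_N[f] = -n f` on `{0,…,N}` is a scalar multiple of `φ_n` there. -/
theorem yule_eigenfunctions (N n : ℕ) (hn : n ≤ N) :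
    (∀ y, y ≤ N → yule (fun x => (x.choose n : ℝ)) y = -(n : ℝ) * (y.choose n : ℝ)) ∧
    (∀ f : ℕ → ℝ, (∀ y, y ≤ N → yule f y = -(n : ℝ) * f y) →
      ∃ c : ℝ, ∀ x, x ≤ N → f x = c * (x.choose n : ℝ)) := by
  constructor
  · intro y hy
    have key := yule_key y n
    simp only [yule]
    nlinarith [key]
  · intro f hf
    refine ⟨f n, ?_⟩
    intro x
    induction x with
    | zero =>
      intro _
      rcases Nat.eq_zero_or_pos n with h0 | hpos
      · subst h0; simp
      · have h := hf 0 (Nat.zero_le N)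
        simp [yule] at h
        rcases h with h | h
        · exact absurd h hpos.ne'
        · rw [h, Nat.choose_eq_zero_of_lt hpos]
          simp
    | succ m ih =>
      intro hmN
      have hm : m ≤ N := Nat.le_of_succ_le hmN
      have h := hf (m + 1) hmN
      simp only [yule, Nat.add_sub_cancel] at h
      have ihm := ih hm
      rcases eq_or_ne (m + 1) n with he | hne
      · rw [← he]; simp
      · have key := yule_key (m + 1) n
        have hsub : (m + 1) - 1 = m := rfl
        rw [hsub] at key
        have hne' : ((m : ℝ) + 1) - n ≠ 0 := by
          intro hc
          apply hne
          have : ((m + 1 : ℕ) : ℝ) = (n : ℝ) := by push_cast; linarith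
          exact_mod_cast this
        have heq : (((m : ℝ) + 1) - n) * f (m + 1) =
            (((m : ℝ) + 1) - n) * (f n * ((m + 1).choose n : ℝ)) := by
          push_cast at h key ⊢
          linear_combination -h + ((m : ℝ) + 1) * ihm + f n * key
        exact mul_left_cancel₀ hne' heq
end

section
/- Fix N ∈ ℕ. For every n ∈ {0,…,N} and every x ∈ {0,…,N}, Λ̂_N[K_{N,n}](x) = 2^{−n} n! C(x,n), i.e., Σ_{y=x}^{N} 2^{x−N} C(N−x, y−x) K_{N,n}(y) = 2^{−n} n! C(x,n). -/
/-- The Markov kernel `Λ̂_N` on `{0,…,N}`: `Λ̂_N(x,y) = 2^{x-N} C(N-x, y-x)` for `x ≤ y`,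
and `0` otherwise. -/
noncomputable def lamHat (N x y : ℕ) : ℝ :=
  if x ≤ y then (2 : ℝ) ^ ((x : ℤ) - (N : ℤ)) * (((N - x).choose (y - x)) : ℝ) else 0

open Finset Polynomial

theorem Polynomial.coeff_one_sub_X_pow (R : Type*) [CommRing R] (b i : ℕ) :
    ((1 - X : R[X]) ^ b).coeff i = (-1) ^ i * (b.choose i : R) := by
  rw [sub_eq_add_neg, add_comm, add_pow, finsetSum_coeff]
  simp only [neg_pow (X : R[X]), one_pow, mul_one, coeff_mul_natCast]
  simp only [← C_1, ← C_neg, ← C_pow, coeff_C_mul_X_pow, ite_mul, zero_mul, sum_ite_eq, mem_range]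
  split_ifs with h
  · rfl
  · rw [Nat.choose_eq_zero_of_lt (by omega), Nat.cast_zero, mul_zero]

theorem krawtchouk_eq_coeff (N n y : ℕ) :
    krawtchouk N n y =
      n.factorial * 2 ^ (-(n : ℤ)) * ((1 + X : ℝ[X]) ^ y * (1 - X) ^ (N - y)).coeff n := by
  rw [krawtchouk, coeff_mul, Nat.sum_antidiagonal_eq_sum_range_succ
    (fun i j => ((1 + X : ℝ[X]) ^ y).coeff i * ((1 - X : ℝ[X]) ^ (N - y)).coeff j)]
  congr 1
  refine sum_congr rfl fun j _ => ?_
  rw [coeff_one_add_X_pow, coeff_one_sub_X_pow]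
  ring

theorem sum_choose_mul_one_add_X_pow_mul_one_sub_X_pow (R : Type*) [CommRing R] (a M : ℕ) :
    ∑ k ∈ range (M + 1), (M.choose k : R[X]) * ((1 + X) ^ (a + k) * (1 - X) ^ (M - k)) =
      2 ^ M * (1 + X) ^ a := by
  calc ∑ k ∈ range (M + 1), (M.choose k : R[X]) * ((1 + X) ^ (a + k) * (1 - X) ^ (M - k))
      = (1 + X) ^ a * ((1 + X) + (1 - X)) ^ M := by
        rw [add_pow (1 + X), mul_sum]
        exact sum_congr rfl fun k _ => by ring
    _ = 2 ^ M * (1 + X) ^ a := by ring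

theorem sum_lamHat_mul (x M : ℕ) (f : ℕ → ℝ) :
    ∑ y ∈ range (x + M + 1), lamHat (x + M) x y * f y =
      (∑ k ∈ range (M + 1), M.choose k * f (x + k)) / 2 ^ M := by
  have hzero : ∀ y ∈ range x, lamHat (x + M) x y * f y = 0 := fun y hy => by
    rw [lamHat, if_neg (by simpa using hy), zero_mul]
  have hshift : ∀ k, lamHat (x + M) x (x + k) = M.choose k / 2 ^ M := fun k => by
    rw [lamHat, if_pos (Nat.le_add_right x k), Nat.add_sub_cancel_left, Nat.add_sub_cancel_left]
    push_cast
    rw [sub_add_cancel_left, zpow_neg, zpow_natCast, div_eq_inv_mul]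
  rw [add_assoc, sum_range_add, sum_eq_zero hzero, zero_add, sum_div]
  exact sum_congr rfl fun k _ => by rw [hshift]; ring

theorem lamHat_maps_krawtchouk_general (N n : ℕ) (x : ℕ) (hx : x ≤ N) :
    ∑ y ∈ Finset.range (N + 1), lamHat N x y * krawtchouk N n y =
      (2 : ℝ) ^ (-(n : ℤ)) * (n.factorial : ℝ) * (x.choose n : ℝ) := by
  obtain ⟨M, rfl⟩ := Nat.exists_eq_add_of_le hx
  have hcoeff : ((2 ^ M * (1 + X) ^ x : ℝ[X])).coeff n = 2 ^ M * x.choose n := by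
    rw [← C_ofNat, ← C_pow, coeff_C_mul, coeff_one_add_X_pow]
  rw [sum_lamHat_mul]
  simp_rw [krawtchouk_eq_coeff, Nat.add_sub_add_left, mul_left_comm (_ : ℝ) (_ * _ : ℝ),
    ← mul_sum, ← coeff_natCast_mul, ← finsetSum_coeff,
    sum_choose_mul_one_add_X_pow_mul_one_sub_X_pow, hcoeff]
  field_simp

/-- `Λ̂_N` maps the Krawtchouk polynomial `K_{N,n}` to `2^{-n} n! φ_n`, where
`φ_n(x) = C(x,n)`:
`∑_{y=x}^N 2^{x-N} C(N-x, y-x) K_{N,n}(y) = 2^{-n} n! C(x,n)`. -/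
theorem lamHat_maps_krawtchouk (N n : ℕ) (hn : n ≤ N) (x : ℕ) (hx : x ≤ N) :
    ∑ y ∈ Finset.range (N + 1), lamHat N x y * krawtchouk N n y =
      (2 : ℝ) ^ (-(n : ℤ)) * (n.factorial : ℝ) * (x.choose n : ℝ) :=
  lamHat_maps_krawtchouk_general N n x hx
end

section
/- Fix N ∈ ℕ and let a = (a_0,…,a_N) ∈ ℝ^{N+1} satisfy a_0 = 1 and λ_a(y,x) ≥ 0 for all y ∈ {0,…,N} and x ∈ ℝ. Then the measures Λ_a(y,dx) := λ_a(y,x) γ(dx), y ∈ {0,…,N}, are Borel probability measures on ℝ, and the intertwining relation D_N Λ_a = Λ_a L holds: for every polynomial f : ℝ → ℝ and every y ∈ {0,…,N}, y(Λ_a[f](y−1) − Λ_a[f](y)) = ∫ (f''(x) − x f'(x)) λ_a(y,x) γ(dx), where Λ_a[f](y) = ∫ f(x) λ_a(y,x) γ(dx). -/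
/-!
Everything reduces to identities between polynomials integrated against `γ`.
Gaussian integration by parts, `∫ p' dγ = ∫ x p dγ`, makes `L` symmetric on polynomials,
`∫ (L p) q dγ = -∫ p' q' dγ = ∫ p (L q) dγ`, and gives `∫ h_n dγ = 0` for `n ≥ 1`,
so that `∫ λ_a(y,·) dγ = a_0 = 1`. Since `h_n' = n h_{n-1}`, the Hermite polynomials are
eigenfunctions, `L h_n = -n h_n`, and the identity `y (C(y-1,n) - C(y,n)) = -n C(y,n)`
turns this into `L λ_a(y,·) = y (λ_a(y-1,·) - λ_a(y,·))` for `y ≤ N`. Symmetry of `L`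
moves it from `f` onto `λ_a(y,·)`, which is the intertwining relation.
-/

open MeasureTheory ProbabilityTheory

/-- `λ_a(y,x) = ∑_{n=0}^{min(y,N)} (a_n / n!) C(y,n) h_n(x)`. -/
noncomputable def lambdaA (N : ℕ) (a : ℕ → ℝ) (y : ℕ) (x : ℝ) : ℝ :=
  ∑ n ∈ Finset.range (min y N + 1), (a n / (n.factorial : ℝ)) * (y.choose n : ℝ) * (hermiteR n).eval x

open Polynomial Finset

lemma natCast_mul_choose_pred_sub_choose (y n : ℕ) :
    (y : ℝ) * ((y - 1).choose n - y.choose n) = -(n * y.choose n) := by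
  rcases y with _ | k
  · rcases n with _ | m <;> simp
  rcases n with _ | m
  · simp
  have habsorb : ((k : ℝ) + 1) * k.choose m = (k + 1).choose (m + 1) * (m + 1) := by
    exact_mod_cast Nat.add_one_mul_choose_eq k m
  rw [Nat.add_sub_cancel, Nat.choose_succ_succ'] at *
  push_cast at *
  linear_combination -habsorb

lemma hermiteR_succ (n : ℕ) : hermiteR (n + 1) = X * hermiteR n - derivative (hermiteR n) := rfl

lemma derivative_hermiteR_succ (n : ℕ) :
    derivative (hermiteR (n + 1)) = ((n : ℝ) + 1) • hermiteR n := by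
  induction n with
  | zero => simp [hermiteR]
  | succ m ih =>
    rw [hermiteR_succ (m + 1), derivative_sub, derivative_mul, derivative_X, one_mul, ih,
      derivative_smul, hermiteR_succ m, mul_smul_comm]
    push_cast
    module

noncomputable def ouGenerator : ℝ[X] →ₗ[ℝ] ℝ[X] :=
  derivative ∘ₗ derivative - LinearMap.mulLeft ℝ X ∘ₗ derivative

lemma ouGenerator_apply (p : ℝ[X]) :
    ouGenerator p = derivative (derivative p) - X * derivative p := rfl

lemma ouGenerator_hermiteR (n : ℕ) : ouGenerator (hermiteR n) = (-(n : ℝ)) • hermiteR n := by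
  rcases n with _ | m
  · simp [ouGenerator_apply, hermiteR]
  rw [ouGenerator_apply, derivative_hermiteR_succ, derivative_smul, hermiteR_succ m,
    mul_smul_comm]
  push_cast
  module

noncomputable def lambdaPoly (N : ℕ) (a : ℕ → ℝ) (y : ℕ) : ℝ[X] :=
  ∑ n ∈ range (min y N + 1), (a n / n.factorial * y.choose n) • hermiteR n

lemma eval_lambdaPoly (N : ℕ) (a : ℕ → ℝ) (y : ℕ) (x : ℝ) :
    (lambdaPoly N a y).eval x = lambdaA N a y x := by
  simp [lambdaPoly, lambdaA, eval_finsetSum]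

lemma lambdaPoly_eq_sum_range {N y m : ℕ} (a : ℕ → ℝ) (hyN : y ≤ N) (hym : y ≤ m) :
    lambdaPoly N a y =
      ∑ n ∈ range (m + 1), (a n / n.factorial * y.choose n) • hermiteR n := by
  rw [lambdaPoly, min_eq_left hyN]
  refine sum_subset (range_subset_range.2 (by omega)) fun n _ hn => ?_
  rw [Nat.choose_eq_zero_of_lt (by simpa using hn)]
  simp

lemma ouGenerator_lambdaPoly {N y : ℕ} (a : ℕ → ℝ) (hy : y ≤ N) :
    ouGenerator (lambdaPoly N a y) = (y : ℝ) • (lambdaPoly N a (y - 1) - lambdaPoly N a y) := by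
  rw [lambdaPoly_eq_sum_range a hy le_rfl,
    lambdaPoly_eq_sum_range a (y.sub_le 1 |>.trans hy) (y.sub_le 1), map_sum,
    ← sum_sub_distrib, smul_sum]
  refine sum_congr rfl fun n _ => ?_
  rw [map_smul, ouGenerator_hermiteR, smul_smul, ← sub_smul, smul_smul]
  congr 1
  linear_combination -(a n / n.factorial) * natCast_mul_choose_pred_sub_choose y n

lemma integrable_pow_gaussianReal (μ : ℝ) (v : NNReal) (n : ℕ) :
    Integrable (fun x : ℝ => x ^ n) (gaussianReal μ v) :=
  (memLp_id_gaussianReal (n : NNReal)).integrable_norm_pow'.mono' (by fun_prop)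
    (ae_of_all _ fun x => by simp)

lemma integrable_eval_gaussianReal (μ : ℝ) (v : NNReal) (p : ℝ[X]) :
    Integrable (fun x => p.eval x) (gaussianReal μ v) := by
  induction p using Polynomial.induction_on' with
  | add p q hp hq => simp only [eval_add]; exact hp.add hq
  | monomial n c => simpa using (integrable_pow_gaussianReal μ v n).const_mul c

lemma hasDerivAt_gaussianPDFReal_zero_one (x : ℝ) :
    HasDerivAt (gaussianPDFReal 0 1) (-x * gaussianPDFReal 0 1 x) x := by
  have hexponent : HasDerivAt (fun y : ℝ => -y ^ 2 / 2) (-x) x :=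
    ((hasDerivAt_pow 2 x).fun_neg.div_const 2).congr_deriv (by ring)
  simp only [gaussianPDFReal_def, NNReal.coe_one, mul_one, sub_zero]
  exact (hexponent.exp.const_mul _).congr_deriv (by ring)

lemma integrable_eval_mul_gaussianPDFReal (p : ℝ[X]) :
    Integrable (fun x => p.eval x * gaussianPDFReal 0 1 x) := by
  have h := integrable_eval_gaussianReal 0 1 p
  rw [gaussianReal_of_var_ne_zero 0 one_ne_zero,
    integrable_withDensity_iff_integrable_smul' (measurable_gaussianPDF 0 1)
      (ae_of_all _ fun _ => gaussianPDF_lt_top)] at h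
  simpa [toReal_gaussianPDF, mul_comm] using h

lemma integral_derivative_eval_gaussianReal (p : ℝ[X]) :
    ∫ x, (derivative p).eval x ∂gaussianReal 0 1 = ∫ x, x * p.eval x ∂gaussianReal 0 1 := by
  simp only [integral_gaussianReal_eq_integral_smul one_ne_zero, smul_eq_mul]
  have hparts := integral_mul_deriv_eq_deriv_mul_of_integrable
    (u := fun x => p.eval x) (v := gaussianPDFReal 0 1)
    (fun x _ => p.hasDerivAt x) (fun x _ => hasDerivAt_gaussianPDFReal_zero_one x)
    ((integrable_eval_mul_gaussianPDFReal (-(X * p))).congr (ae_of_all _ fun x => by simp; ring))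
    (integrable_eval_mul_gaussianPDFReal (derivative p))
    (integrable_eval_mul_gaussianPDFReal p)
  calc ∫ x, gaussianPDFReal 0 1 x * (derivative p).eval x
      = -∫ x, p.eval x * (-x * gaussianPDFReal 0 1 x) := by
        rw [hparts, neg_neg]; simp_rw [mul_comm]
    _ = ∫ x, gaussianPDFReal 0 1 x * (x * p.eval x) := by
        rw [← integral_neg]; congr 1; ext x; ring

noncomputable def gaussianPolyIntegral : ℝ[X] →ₗ[ℝ] ℝ where
  toFun p := ∫ x, p.eval x ∂gaussianReal 0 1
  map_add' p q := by
    simp only [eval_add]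
    exact integral_add (integrable_eval_gaussianReal 0 1 p) (integrable_eval_gaussianReal 0 1 q)
  map_smul' c p := by
    simp only [eval_smul, smul_eq_mul, RingHom.id_apply]
    exact integral_const_mul c _

lemma gaussianPolyIntegral_apply (p : ℝ[X]) :
    gaussianPolyIntegral p = ∫ x, p.eval x ∂gaussianReal 0 1 := rfl

lemma gaussianPolyIntegral_one : gaussianPolyIntegral 1 = 1 := by
  simp [gaussianPolyIntegral_apply]

lemma gaussianPolyIntegral_derivative (p : ℝ[X]) :
    gaussianPolyIntegral (derivative p) = gaussianPolyIntegral (X * p) := by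
  simpa [gaussianPolyIntegral_apply] using integral_derivative_eval_gaussianReal p

lemma gaussianPolyIntegral_hermiteR_succ (n : ℕ) :
    gaussianPolyIntegral (hermiteR (n + 1)) = 0 := by
  rw [hermiteR_succ, map_sub, gaussianPolyIntegral_derivative, sub_self]

lemma gaussianPolyIntegral_ouGenerator_mul (p q : ℝ[X]) :
    gaussianPolyIntegral (ouGenerator p * q) =
      -gaussianPolyIntegral (derivative p * derivative q) := by
  have hstein := gaussianPolyIntegral_derivative (derivative p * q)
  rw [derivative_mul, map_add] at hstein
  rw [ouGenerator_apply, sub_mul, map_sub, mul_assoc, ← hstein]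
  ring

lemma gaussianPolyIntegral_ouGenerator_mul_comm (p q : ℝ[X]) :
    gaussianPolyIntegral (ouGenerator p * q) = gaussianPolyIntegral (p * ouGenerator q) := by
  rw [mul_comm p, gaussianPolyIntegral_ouGenerator_mul, gaussianPolyIntegral_ouGenerator_mul,
    mul_comm]

lemma gaussianPolyIntegral_lambdaPoly {N y : ℕ} (a : ℕ → ℝ) (ha0 : a 0 = 1) :
    gaussianPolyIntegral (lambdaPoly N a y) = 1 := by
  rw [lambdaPoly, map_sum, sum_eq_single_of_mem 0 (by simp)]
  · simp [hermiteR, ha0, gaussianPolyIntegral_one]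
  · rintro (_ | n) _ hn
    · exact absurd rfl hn
    · rw [map_smul, gaussianPolyIntegral_hermiteR_succ, smul_zero]

lemma isProbabilityMeasure_withDensity_ofReal {α : Type*} [MeasurableSpace α] {μ : Measure α}
    {f : α → ℝ} (hf : Integrable f μ) (hf0 : 0 ≤ᵐ[μ] f) (hf1 : ∫ x, f x ∂μ = 1) :
    IsProbabilityMeasure (μ.withDensity fun x => ENNReal.ofReal (f x)) := by
  constructor
  rw [withDensity_apply _ MeasurableSet.univ, Measure.restrict_univ,
    ← ofReal_integral_eq_lintegral_ofReal hf hf0, hf1, ENNReal.ofReal_one]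

/-- If `a ∈ ℝ^{N+1}` satisfies `a_0 = 1` and `λ_a(y,x) ≥ 0` for all `y ∈ {0,…,N}`, `x ∈ ℝ`,
then the measures `Λ_a(y,dx) = λ_a(y,x) γ(dx)` are probability measures and the
intertwining relation `D_N Λ_a = Λ_a L` holds on polynomials. -/
theorem lambdaA_gives_intertwining (N : ℕ) (a : ℕ → ℝ) (ha0 : a 0 = 1)
    (hpos : ∀ y, y ≤ N → ∀ x : ℝ, 0 ≤ lambdaA N a y x) :
    (∀ y, y ≤ N →
      IsProbabilityMeasure
        ((gaussianReal 0 1).withDensity (fun x => ENNReal.ofReal (lambdaA N a y x)))) ∧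
    (∀ p : Polynomial ℝ, ∀ y, y ≤ N →
      (y : ℝ) * ((∫ x, p.eval x * lambdaA N a (y - 1) x ∂(gaussianReal 0 1)) -
          ∫ x, p.eval x * lambdaA N a y x ∂(gaussianReal 0 1)) =
        ∫ x, (p.derivative.derivative.eval x - x * p.derivative.eval x) * lambdaA N a y x
          ∂(gaussianReal 0 1)) := by
  refine ⟨fun y hy => ?_, fun p y hy => ?_⟩
  · refine isProbabilityMeasure_withDensity_ofReal ?_ (ae_of_all _ (hpos y hy)) ?_
    · simpa [eval_lambdaPoly] using integrable_eval_gaussianReal 0 1 (lambdaPoly N a y)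
    · simpa [gaussianPolyIntegral_apply, eval_lambdaPoly] using
        gaussianPolyIntegral_lambdaPoly (N := N) (y := y) a ha0
  · have hintegral (q : ℝ[X]) (z : ℕ) :
        ∫ x, q.eval x * lambdaA N a z x ∂gaussianReal 0 1 =
          gaussianPolyIntegral (q * lambdaPoly N a z) := by
      simp [gaussianPolyIntegral_apply, eval_lambdaPoly]
    have hgen (x : ℝ) : p.derivative.derivative.eval x - x * p.derivative.eval x =
        (ouGenerator p).eval x := by simp [ouGenerator_apply]
    simp_rw [hgen, hintegral]
    rw [gaussianPolyIntegral_ouGenerator_mul_comm, ouGenerator_lambdaPoly a hy, mul_smul_comm,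
      map_smul, mul_sub p, map_sub, smul_eq_mul]
end

section
/- Let a = (a_0, a_1, a_2, a_3) ∈ ℝ⁴ with a_0 = 1. Then λ_a(y,x) ≥ 0 for all y ∈ {0,1,2,3} and all x ∈ ℝ if and only if a_1 = 0, a_3 = 0 and 0 ≤ a_2 ≤ 2/3. -/
/-!
A real polynomial that is nonnegative on all of `ℝ` has even degree and a nonnegative leading
coefficient, since otherwise its top term wins for `|x|` large. Applied to
`λ_a(1, ·) = 1 + a₁ x` this forces `a₁ = 0`; applied to
`λ_a(3, ·) = 1 + (3a₂/2)(x² - 1) + (a₃/6)(x³ - 3x)` it then forces `a₃ = 0` and `a₂ ≥ 0`, and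
evaluating at `x = 0` gives `a₂ ≤ 2/3`. Conversely, for `a₁ = a₃ = 0` the values are
`1 + (a₂/2) C(y,2) (x² - 1) ≥ 1 - (3/2) a₂ ≥ 0`.
-/

lemma eq_zero_of_forall_nonneg_add_mul {b c : ℝ} (h : ∀ x, 0 ≤ c + b * x) : b = 0 := by
  by_contra hb
  have hneg : c + b * (-(|c| + 1) / b) < 0 := by
    rw [mul_div_cancel₀ _ hb]
    linarith [le_abs_self c]
  exact hneg.not_ge (h _)

lemma nonneg_of_forall_nonneg_add_mul_sq {a c : ℝ} (h : ∀ x, 0 ≤ c + a * x ^ 2) :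
    0 ≤ a := by
  by_contra! ha
  have hna : 0 < -a := neg_pos.mpr ha
  set M := (|c| + 1) / -a + 1 with hM_def
  have hM : 1 ≤ M := by
    have : 0 ≤ (|c| + 1) / -a := by positivity
    linarith
  have haM : -a * M = |c| + 1 - a := by
    simp only [M, mul_add, mul_one, mul_div_cancel₀ _ hna.ne']
    ring
  have hM2 : M ≤ M ^ 2 := by nlinarith
  nlinarith [h M, le_abs_self c]

lemma nonpos_of_forall_nonneg_cubic {a b c d : ℝ}
    (h : ∀ x, 0 ≤ c + b * x + a * x ^ 2 + d * x ^ 3) : d ≤ 0 := by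
  by_contra! hd
  set M := (|a| + |b| + |c|) / d + 1 with hM_def
  have hM : 1 ≤ M := by
    have : 0 ≤ (|a| + |b| + |c|) / d := by positivity
    linarith
  have hdM : d * M = |a| + |b| + |c| + d := by
    simp only [M, mul_add, mul_one, mul_div_cancel₀ _ hd.ne']
  have hM2 : M ≤ M ^ 2 := by nlinarith
  -- each lower-order term at `x = -M` is at most `(|a| + |b| + |c|) M² = (d M - d) M²`
  have hc : c ≤ |c| * M ^ 2 := by nlinarith [le_abs_self c, abs_nonneg c]
  have hb : -b * M ≤ |b| * M ^ 2 := by nlinarith [neg_le_abs b, abs_nonneg b]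
  have ha : a * M ^ 2 ≤ |a| * M ^ 2 := by nlinarith [le_abs_self a]
  nlinarith [h (-M)]

lemma eq_zero_of_forall_nonneg_cubic {a b c d : ℝ}
    (h : ∀ x, 0 ≤ c + b * x + a * x ^ 2 + d * x ^ 3) : d = 0 := by
  have hneg : ∀ x, 0 ≤ c + -b * x + a * x ^ 2 + -d * x ^ 3 := fun x => by
    convert h (-x) using 1
    ring
  linarith [nonpos_of_forall_nonneg_cubic h, nonpos_of_forall_nonneg_cubic hneg]

section
variable {N : ℕ} (a : ℕ → ℝ) (x : ℝ)

lemma lambdaA_zero : lambdaA N a 0 x = a 0 := by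
  simp [lambdaA, hermiteR]

lemma lambdaA_one (hN : 1 ≤ N) : lambdaA N a 1 x = a 0 + a 1 * x := by
  simp [lambdaA, min_eq_left hN, Finset.sum_range_succ, hermiteR]

lemma lambdaA_two (hN : 2 ≤ N) :
    lambdaA N a 2 x = a 0 + 2 * a 1 * x + a 2 / 2 * (x ^ 2 - 1) := by
  simp [lambdaA, min_eq_left hN, Finset.sum_range_succ, hermiteR]
  ring

lemma lambdaA_three (hN : 3 ≤ N) :
    lambdaA N a 3 x =
      a 0 + 3 * a 1 * x + 3 * a 2 / 2 * (x ^ 2 - 1) + a 3 / 6 * (x ^ 3 - 3 * x) := by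
  simp [lambdaA, min_eq_left hN, Finset.sum_range_succ, hermiteR, Nat.factorial]
  ring

end

lemma lambdaA_three_nonneg {a : ℕ → ℝ} (ha0 : a 0 = 1) (ha1 : a 1 = 0) (ha3 : a 3 = 0)
    (ha2 : 0 ≤ a 2) (ha2' : a 2 ≤ 2 / 3) {y : ℕ} (hy : y ≤ 3) (x : ℝ) :
    0 ≤ lambdaA 3 a y x := by
  interval_cases y
  · simp [lambdaA_zero, ha0]
  · simp [lambdaA_one, ha0, ha1]
  · rw [lambdaA_two a x (by norm_num), ha0, ha1]
    nlinarith [sq_nonneg x]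
  · rw [lambdaA_three a x le_rfl, ha0, ha1, ha3]
    nlinarith [sq_nonneg x]

/-- Characterization of `A_3`: for `a = (1, a_1, a_2, a_3)`, one has `λ_a(y,x) ≥ 0` for all
`y ∈ {0,1,2,3}` and `x ∈ ℝ` if and only if `a_1 = 0`, `a_3 = 0` and `0 ≤ a_2 ≤ 2/3`. -/
theorem lambdaA_three_characterization (a : ℕ → ℝ) (ha0 : a 0 = 1) :
    (∀ y, y ≤ 3 → ∀ x : ℝ, 0 ≤ lambdaA 3 a y x) ↔
      (a 1 = 0 ∧ a 3 = 0 ∧ 0 ≤ a 2 ∧ a 2 ≤ 2 / 3) := by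
  constructor
  · intro h
    have ha1 : a 1 = 0 := eq_zero_of_forall_nonneg_add_mul fun x => by
      simpa [lambdaA_one, ha0] using h 1 (by norm_num) x
    have hcubic : ∀ x : ℝ,
        0 ≤ (1 - 3 * a 2 / 2) + -(a 3 / 2) * x + 3 * a 2 / 2 * x ^ 2 + a 3 / 6 * x ^ 3 := by
      intro x
      have := h 3 le_rfl x
      rw [lambdaA_three a x le_rfl, ha0, ha1] at this
      linarith
    have ha3 : a 3 = 0 := by linarith [eq_zero_of_forall_nonneg_cubic hcubic]
    have hquad : ∀ x : ℝ, 0 ≤ (1 - 3 * a 2 / 2) + 3 * a 2 / 2 * x ^ 2 := fun x => by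
      simpa [ha3] using hcubic x
    exact ⟨ha1, ha3, by linarith [nonneg_of_forall_nonneg_add_mul_sq hquad], by linarith [hquad 0]⟩
  · rintro ⟨ha1, ha3, ha2, ha2'⟩ _ hy
    exact lambdaA_three_nonneg ha0 ha1 ha3 ha2 ha2' hy
end

section
/- Let l ∈ ℂ and let f : ℕ → ℂ be a function that is not identically zero. Then the eigenvalue equation D_∞[f] = −l f holds, i.e., y(f(y−1) − f(y)) = −l f(y) for all y ∈ ℕ (the equation at y = 0 reading 0 = −l f(0)), if and only if l is a nonnegative integer and f is a nonzero scalar multiple of φ_l, where φ_l(y) = C(y,l). -/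
lemma yule_choose_id (k m : ℕ) :
    ((k : ℂ) + 1) * (k.choose m : ℂ) = ((k : ℂ) + 1 - m) * ((k + 1).choose m : ℂ) := by
  rcases le_or_gt m (k + 1) with h | h
  · have h1 := Nat.choose_mul_succ_eq k m
    have h2 : ((k.choose m * (k + 1) : ℕ) : ℂ) = (((k + 1).choose m * (k + 1 - m) : ℕ) : ℂ) := by
      exact_mod_cast congrArg (Nat.cast : ℕ → ℂ) h1
    push_cast [Nat.cast_sub h] at h2
    linear_combination h2
  · have hk : k < m := Nat.lt_of_succ_lt h
    rw [Nat.choose_eq_zero_of_lt hk, Nat.choose_eq_zero_of_lt h]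
    simp

/-- Spectral decomposition of the infinite Yule generator `D_∞[f](y) = y(f(y-1) - f(y))`
on `ℕ`: for `f` not identically zero, `D_∞[f] = -l f` holds if and only if `l` is a
nonnegative integer `m` and `f` is a nonzero scalar multiple of `φ_m(y) = C(y,m)`. -/
theorem yule_infinite_eigenfunctions (l : ℂ) (f : ℕ → ℂ) (hf : ∃ y, f y ≠ 0) :
    (∀ y : ℕ, (y : ℂ) * (f (y - 1) - f y) = -l * f y) ↔
      ∃ m : ℕ, l = (m : ℂ) ∧ ∃ c : ℂ, c ≠ 0 ∧ ∀ y, f y = c * (y.choose m : ℂ) := by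
  constructor
  · intro h
    set m := Nat.find hf with hm
    have hfm : f m ≠ 0 := Nat.find_spec hf
    have hlt : ∀ y < m, f y = 0 := by
      intro y hy
      have := Nat.find_min hf hy
      simpa using this
    have hl : l = (m : ℂ) := by
      have h1 := h m
      have h2 : (m : ℂ) * f (m - 1) = 0 := by
        rcases Nat.eq_zero_or_pos m with h0 | h0
        · simp [h0]
        · rw [hlt (m - 1) (Nat.sub_lt h0 one_pos), mul_zero]
      have h3 : -(m : ℂ) * f m = -l * f m := by
        rw [mul_sub, h2, zero_sub, ← neg_mul] at h1
        exact h1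
      have h4 := mul_right_cancel₀ hfm h3
      exact (neg_inj.mp h4).symm
    have key : ∀ y, m ≤ y → f y = f m * (y.choose m : ℂ) := by
      intro y hy
      induction y, hy using Nat.le_induction with
      | base => simp
      | succ y hy ih =>
        have h1 := h (y + 1)
        rw [hl] at h1
        simp only [Nat.add_sub_cancel] at h1
        push_cast at h1
        have hne : ((y : ℂ) + 1 - m) ≠ 0 := by
          have : (y : ℂ) + 1 ≠ (m : ℂ) := by
            exact_mod_cast (Nat.lt_succ_of_le hy).ne'
          exact sub_ne_zero.mpr this
        have h2 : ((y : ℂ) + 1 - m) * f (y + 1) = ((y : ℂ) + 1) * f y := by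
          linear_combination -h1
        apply mul_left_cancel₀ hne
        rw [h2, ih]
        linear_combination f m * yule_choose_id y m
    refine ⟨m, hl, f m, hfm, fun y => ?_⟩
    rcases lt_or_ge y m with hy | hy
    · rw [hlt y hy, Nat.choose_eq_zero_of_lt hy]
      simp
    · exact key y hy
  · rintro ⟨m, rfl, c, hc, hfc⟩
    intro y
    cases y with
    | zero =>
      rcases m with _ | m <;> simp [hfc]
    | succ k =>
      simp only [hfc, Nat.add_sub_cancel]
      push_cast
      linear_combination c * yule_choose_id k m
end

section
/- Fix N ∈ ℕ with N ≥ 1. The constant function 𝟙 satisfies D̃_N[𝟙] = 0, and for every n ∈ {1,…,N}, the function φ̃_n(y) = (−1)^y C(n−1, −y) on {−N,…,0} satisfies D̃_N[φ̃_n] = −n φ̃_n. -/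
/-- The reverse Yule generator `D̃_N` on `{-N,…,0}`:
`D̃_N[f](y) = (1-y)(f(y-1) - f(y))` for `y ∈ {-N+1,…,0}`, and `D̃_N[f](-N) = 0`
(the state `-N` is absorbing). -/
noncomputable def reverseYule (N : ℕ) (f : ℤ → ℝ) (y : ℤ) : ℝ :=
  if y = -(N : ℤ) then 0 else ((1 : ℝ) - (y : ℝ)) * (f (y - 1) - f y)

/-- `φ̃_n(y) = (-1)^y C(n-1, -y)`. -/
noncomputable def phiTilde (n : ℕ) (y : ℤ) : ℝ :=
  (-1 : ℝ) ^ y * ((n - 1).choose (-y).toNat : ℝ)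

lemma phiTilde_neg (n k : ℕ) :
    phiTilde n (-(k : ℤ)) = (-1 : ℝ) ^ k * ((n - 1).choose k : ℝ) := by
  unfold phiTilde
  rw [neg_neg, Int.toNat_natCast, zpow_neg, zpow_natCast, ← inv_pow, inv_neg, inv_one]

/-- Eigenfunctions of the reverse Yule generator `D̃_N` for `N ≥ 1`: the constant function
`𝟙` satisfies `D̃_N[𝟙] = 0`, and for `n ∈ {1,…,N}` the function `φ̃_n(y) = (-1)^y C(n-1,-y)`
satisfies `D̃_N[φ̃_n] = -n φ̃_n` on `{-N,…,0}`. -/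
theorem reverseYule_eigenfunctions (N : ℕ) (hN : 1 ≤ N) :
    (∀ y : ℤ, -(N : ℤ) ≤ y → y ≤ 0 → reverseYule N (fun _ => 1) y = 0) ∧
    (∀ n : ℕ, 1 ≤ n → n ≤ N → ∀ y : ℤ, -(N : ℤ) ≤ y → y ≤ 0 →
      reverseYule N (phiTilde n) y = -(n : ℝ) * phiTilde n y) := by
  constructor
  · intro y _ _
    unfold reverseYule
    split <;> simp
  · intro n hn hnN y hy hy0
    obtain ⟨m, rfl⟩ : ∃ m, n = m + 1 := ⟨n - 1, by omega⟩
    obtain ⟨k, rfl⟩ := Int.exists_eq_neg_ofNat hy0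
    by_cases h : -(k : ℤ) = -(N : ℤ)
    · have hkN : k = N := by omega
      subst hkN
      rw [reverseYule, if_pos h, phiTilde_neg]
      simp only [Nat.add_sub_cancel]
      have : m.choose k = 0 := Nat.choose_eq_zero_of_lt (by omega)
      rw [this]
      simp
    · have hy1 : -(k : ℤ) - 1 = -((k + 1 : ℕ) : ℤ) := by push_cast; ring
      rw [reverseYule, if_neg h, hy1, phiTilde_neg, phiTilde_neg]
      simp only [Nat.add_sub_cancel]
      have hchoose : ((k : ℝ) + 1) * ((m + 1).choose (k + 1)) =
          (m + 1) * (m.choose k) := by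
        have := congrArg (fun a : ℕ => (a : ℝ)) (Nat.add_one_mul_choose_eq m k)
        push_cast at this
        linarith
      have hsum : (m.choose (k + 1) : ℝ) + (m.choose k : ℝ) =
          ((m + 1).choose (k + 1) : ℝ) := by
        rw [← Nat.cast_add, Nat.choose_succ_succ, Nat.add_comm]
      push_cast
      rw [pow_succ]
      linear_combination (-(-1 : ℝ) ^ k * ((k : ℝ) + 1)) * hsum + (-(-1 : ℝ) ^ k) * hchoose
end

section
/- Fix N ∈ ℕ with N ≥ 1 and let a = (a_0,…,a_N) ∈ ℝ^{N+1} with a_0 = 1. If Σ_{n=0}^{N} (a_n/n!) φ̃_n(y) h_n(x) ≥ 0 for all y ∈ {−N,…,0} and all x ∈ ℝ (where φ̃_0 = 1 and φ̃_n(y) = (−1)^y C(n−1, −y) for n ≥ 1), then a_n = 0 for every n ∈ {1,…,N}. Consequently, the only Markov intertwining from the reverse Yule generator D̃_N to the Ornstein–Uhlenbeck generator is trivial. -/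
/-- `φ̃_0 = 1` and `φ̃_n(y) = (-1)^y C(n-1, -y)` for `n ≥ 1`. -/
noncomputable def phiTildeFull (n : ℕ) (y : ℤ) : ℝ :=
  if n = 0 then 1 else (-1 : ℝ) ^ y * ((n - 1).choose (-y).toNat : ℝ)

/-!
Write `P_y = ∑_{n ≤ N} (a_n/n!) φ̃_n(y) h_n`. If `n ≥ 1` is the largest index with `a_n ≠ 0`,
then, `h_k` being monic of degree `k`, `P_y` has degree at most `n` and `X^n`-coefficient
`(a_n/n!) φ̃_n(y)`. A polynomial that is nonnegative on `ℝ` has even degree and nonnegative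
leading coefficient. For odd `n` this forces `a_n = 0` already at `y = 0`, where `φ̃_n(0) = 1`;
for even `n ≥ 2` the coefficients at `y = 0` and at `y = -1`, where `φ̃_n(-1) = -(n-1)`, have
opposite signs, so again `a_n = 0`.
-/

open Polynomial Finset Filter

namespace Polynomial

section NonnegOnReals

variable {p : ℝ[X]}

theorem leadingCoeff_nonneg_of_eval_nonneg (h : ∀ x, 0 ≤ p.eval x) : 0 ≤ p.leadingCoeff := by
  rcases le_or_gt p.degree 0 with hdeg | hdeg
  · rw [leadingCoeff, natDegree_eq_zero_iff_degree_le_zero.mpr hdeg, coeff_zero_eq_eval_zero]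
    exact h 0
  · by_contra! hlt
    obtain ⟨x, hx⟩ := ((p.tendsto_atBot_of_leadingCoeff_nonpos hdeg hlt.le).eventually
      (eventually_lt_atBot 0)).exists
    exact (h x).not_gt hx

theorem even_natDegree_of_eval_nonneg (h : ∀ x, 0 ≤ p.eval x) : Even p.natDegree := by
  by_contra hodd
  rw [Nat.not_even_iff_odd] at hodd
  have hlc : 0 ≤ (p.comp (-X)).leadingCoeff :=
    leadingCoeff_nonneg_of_eval_nonneg fun x => by simpa using h (-x)
  rw [comp_neg_X_leadingCoeff_eq, hodd.neg_one_pow, neg_one_mul, neg_nonneg] at hlc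
  have hp : p = 0 :=
    leadingCoeff_eq_zero.mp (le_antisymm hlc (leadingCoeff_nonneg_of_eval_nonneg h))
  simp [hp] at hodd

theorem coeff_nonneg_of_eval_nonneg (h : ∀ x, 0 ≤ p.eval x) {m : ℕ} (hm : p.natDegree ≤ m) :
    0 ≤ p.coeff m := by
  rcases hm.eq_or_lt with rfl | hlt
  · exact leadingCoeff_nonneg_of_eval_nonneg h
  · rw [coeff_eq_zero_of_natDegree_lt hlt]

theorem coeff_eq_zero_of_eval_nonneg_of_odd (h : ∀ x, 0 ≤ p.eval x) {m : ℕ}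
    (hm : p.natDegree ≤ m) (hodd : Odd m) : p.coeff m = 0 := by
  rcases hm.eq_or_lt with rfl | hlt
  · exact absurd (even_natDegree_of_eval_nonneg h) (Nat.not_even_iff_odd.mpr hodd)
  · exact coeff_eq_zero_of_natDegree_lt hlt

end NonnegOnReals

section TriangularSum

variable {R : Type*} [Semiring R] {q : ℕ → R[X]}

theorem natDegree_sum_range_C_mul_le (hq : ∀ k, (q k).natDegree ≤ k) (c : ℕ → R) (n : ℕ) :
    (∑ k ∈ range (n + 1), C (c k) * q k).natDegree ≤ n :=
  natDegree_sum_le_of_forall_le _ _ fun k hk =>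
    (natDegree_C_mul_le _ _).trans ((hq k).trans (Nat.lt_succ_iff.mp (mem_range.mp hk)))

theorem coeff_sum_range_C_mul_self (hq : ∀ k, (q k).natDegree ≤ k) (c : ℕ → R) (n : ℕ) :
    (∑ k ∈ range (n + 1), C (c k) * q k).coeff n = c n * (q n).coeff n := by
  rw [finsetSum_coeff, sum_range_succ, coeff_C_mul, sum_eq_zero, zero_add]
  intro k hk
  rw [coeff_C_mul, coeff_eq_zero_of_natDegree_lt ((hq k).trans_lt (mem_range.mp hk)), mul_zero]

end TriangularSum

end Polynomial

theorem hermiteR_eq_map_hermite (n : ℕ) : hermiteR n = (hermite n).map (Int.castRingHom ℝ) := by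
  induction n with
  | zero => simp [hermiteR]
  | succ n ih => simp [hermiteR, hermite_succ, ih]

theorem natDegree_hermiteR (n : ℕ) : (hermiteR n).natDegree = n := by
  rw [hermiteR_eq_map_hermite, (hermite_monic n).natDegree_map, natDegree_hermite]

theorem coeff_hermiteR_self (n : ℕ) : (hermiteR n).coeff n = 1 := by
  simp [hermiteR_eq_map_hermite, coeff_map]

theorem phiTildeFull_zero_right {n : ℕ} (hn : n ≠ 0) : phiTildeFull n 0 = 1 := by
  simp [phiTildeFull, hn]

theorem phiTildeFull_neg_one {n : ℕ} (hn : n ≠ 0) :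
    phiTildeFull n (-1) = -((n - 1 : ℕ) : ℝ) := by
  simp [phiTildeFull, hn, Nat.choose_one_right]

noncomputable def intertwiningPoly (a : ℕ → ℝ) (N : ℕ) (y : ℤ) : ℝ[X] :=
  ∑ n ∈ range (N + 1), C (a n / n.factorial * phiTildeFull n y) * hermiteR n

theorem eval_intertwiningPoly (a : ℕ → ℝ) (N : ℕ) (y : ℤ) (x : ℝ) :
    (intertwiningPoly a N y).eval x = ∑ n ∈ range (N + 1),
      (a n / (n.factorial : ℝ)) * phiTildeFull n y * (hermiteR n).eval x := by
  simp [intertwiningPoly, eval_finsetSum]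

theorem intertwiningPoly_eq_of_eq_zero {a : ℕ → ℝ} {N n : ℕ} (hnN : n ≤ N)
    (ha : ∀ m, n < m → m ≤ N → a m = 0) (y : ℤ) :
    intertwiningPoly a N y = intertwiningPoly a n y := by
  refine (sum_subset (range_subset_range.mpr (by omega)) fun m hmN hmn => ?_).symm
  simp only [mem_range, not_lt] at hmN hmn
  simp [ha m (by omega) (by omega)]

theorem natDegree_intertwiningPoly_le (a : ℕ → ℝ) (n : ℕ) (y : ℤ) :
    (intertwiningPoly a n y).natDegree ≤ n :=
  natDegree_sum_range_C_mul_le (fun k => (natDegree_hermiteR k).le) _ n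

theorem coeff_intertwiningPoly_self (a : ℕ → ℝ) (n : ℕ) (y : ℤ) :
    (intertwiningPoly a n y).coeff n = a n / n.factorial * phiTildeFull n y := by
  rw [intertwiningPoly, coeff_sum_range_C_mul_self (fun k => (natDegree_hermiteR k).le),
    coeff_hermiteR_self, mul_one]

theorem eq_zero_of_intertwiningPoly_nonneg {a : ℕ → ℝ} {n : ℕ} (hn : 1 ≤ n)
    (hpos : ∀ y : ℤ, -1 ≤ y → y ≤ 0 → ∀ x, 0 ≤ (intertwiningPoly a n y).eval x) : a n = 0 := by
  have hn0 : n ≠ 0 := by omega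
  have hfac : (0 : ℝ) < n.factorial := by positivity
  have hdeg := natDegree_intertwiningPoly_le a n
  have hcoeff0 : (intertwiningPoly a n 0).coeff n = a n / n.factorial := by
    rw [coeff_intertwiningPoly_self, phiTildeFull_zero_right hn0, mul_one]
  have hpos0 := hpos 0 (by norm_num) le_rfl
  rcases n.even_or_odd with heven | hodd
  · have hn1 : (0 : ℝ) < (n - 1 : ℕ) := by
      obtain ⟨t, rfl⟩ := heven
      exact_mod_cast (by omega : 0 < t + t - 1)
    have hc0 : 0 ≤ a n / n.factorial := hcoeff0 ▸ coeff_nonneg_of_eval_nonneg hpos0 (hdeg 0)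
    have hc1 : 0 ≤ a n / n.factorial * -((n - 1 : ℕ) : ℝ) := by
      rw [← phiTildeFull_neg_one hn0, ← coeff_intertwiningPoly_self]
      exact coeff_nonneg_of_eval_nonneg (hpos (-1) le_rfl (by norm_num)) (hdeg (-1))
    have hc : a n / n.factorial = 0 := by nlinarith
    rwa [div_eq_zero_iff, or_iff_left hfac.ne'] at hc
  · have hc : a n / n.factorial = 0 :=
      hcoeff0 ▸ coeff_eq_zero_of_eval_nonneg_of_odd hpos0 (hdeg 0) hodd
    rwa [div_eq_zero_iff, or_iff_left hfac.ne'] at hc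

theorem reverseYule_OU_intertwining_trivial_general (N : ℕ) (a : ℕ → ℝ)
    (hpos : ∀ y : ℤ, -(N : ℤ) ≤ y → y ≤ 0 → ∀ x : ℝ,
      0 ≤ ∑ n ∈ Finset.range (N + 1),
        (a n / (n.factorial : ℝ)) * phiTildeFull n y * (hermiteR n).eval x) :
    ∀ n, 1 ≤ n → n ≤ N → a n = 0 := by
  simp only [← eval_intertwiningPoly] at hpos
  intro n
  induction n using Nat.strong_decreasing_induction with
  | base => exact ⟨N, fun m hm _ hmN => absurd hmN (by omega)⟩
  | step n ih =>
    intro hn hnN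
    refine eq_zero_of_intertwiningPoly_nonneg hn fun y hy1 hy0 x => ?_
    rw [← intertwiningPoly_eq_of_eq_zero hnN fun m hm hmN => ih m hm (by omega) hmN]
    exact hpos y (by omega) hy0 x

/-- For `N ≥ 1` and `a = (a_0,…,a_N)` with `a_0 = 1`: if
`∑_{n=0}^N (a_n/n!) φ̃_n(y) h_n(x) ≥ 0` for all `y ∈ {-N,…,0}` and `x ∈ ℝ`, then `a_n = 0`
for every `n ∈ {1,…,N}` (so the only Markov intertwining from the reverse Yule generator
`D̃_N` to the Ornstein–Uhlenbeck generator is trivial). -/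
theorem reverseYule_OU_intertwining_trivial (N : ℕ) (hN : 1 ≤ N) (a : ℕ → ℝ) (ha0 : a 0 = 1)
    (hpos : ∀ y : ℤ, -(N : ℤ) ≤ y → y ≤ 0 → ∀ x : ℝ,
      0 ≤ ∑ n ∈ Finset.range (N + 1),
        (a n / (n.factorial : ℝ)) * phiTildeFull n y * (hermiteR n).eval x) :
    ∀ n, 1 ≤ n → n ≤ N → a n = 0 :=
  reverseYule_OU_intertwining_trivial_general N a hpos
end
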